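/- The class of languages recognised by a pseudo-variety V of finite Ext-algebras forms a pseudo-variety of VPL: for each alphabet it is a Boolean algebra closed under inverse ext-operations, and the whole class is closed under inverse Ext-algebra morphisms. -/

import Mathlib

inductive VPKind : Type
  | call | ret | intern
deriving DecidableEq

class VPAlphabet (A : Type) where
  kind : A → VPKind

variable {A : Type} [VPAlphabet A]

inductive WellMatched : List A → Prop
  | nil : WellMatched []
  | intern (c : A) (hc : VPAlphabet.kind c = VPKind.intern) : WellMatched [c]
  | ext (a b : A) (w : List A) (ha : VPAlphabet.kind a = VPKind.call)
      (hb : VPAlphabet.kind b = VPKind.ret) (hw : WellMatched w) :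
      WellMatched (a :: w ++ [b])
  | append (u v : List A) (hu : WellMatched u) (hv : WellMatched v) : WellMatched (u ++ v)

theorem wm_insert {u v x : List A} (h : WellMatched (u ++ v)) (hx : WellMatched x) :
    WellMatched (u ++ x ++ v) := by
  suffices H : ∀ w, WellMatched w → ∀ u' v' : List A, w = u' ++ v' →
      WellMatched (u' ++ x ++ v') from H _ h u v rfl
  intro w hw
  induction hw with
  | nil =>
    intro u' v' huv
    obtain ⟨rfl, rfl⟩ := List.append_eq_nil_iff.mp huv.symm
    simpa using hx
  | intern c hc =>
    intro u' v' huv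
    rcases u' with _ | ⟨a, u''⟩
    · simp only [List.nil_append] at huv
      subst huv
      simpa using WellMatched.append x [c] hx (WellMatched.intern c hc)
    · have h1 : c = a := by injection huv
      have h2 : ([] : List A) = u'' ++ v' := by injection huv
      obtain ⟨rfl, rfl⟩ := List.append_eq_nil_iff.mp h2.symm
      subst h1
      simpa using WellMatched.append [c] x (WellMatched.intern c hc) hx
  | ext a b w' ha hb hw' ih =>
    intro u' v' huv
    rcases u' with _ | ⟨a'', u''⟩
    · simp only [List.nil_append] at huv
      subst huv
      simpa using WellMatched.append x _ hx (WellMatched.ext a b w' ha hb hw')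
    · have h1 : a = a'' := by injection huv
      have huv2 : w' ++ [b] = u'' ++ v' := by injection huv
      subst h1
      rcases List.eq_nil_or_concat v' with rfl | ⟨v'', b'', rfl⟩
      · have h3 : u'' = w' ++ [b] := by simpa using huv2.symm
        subst h3
        simpa using WellMatched.append _ x (WellMatched.ext a b w' ha hb hw') hx
      · have h4 : w' = u'' ++ v'' ∧ [b] = [b''] :=
          List.append_inj' (by simpa [List.append_assoc] using huv2) rfl
        obtain ⟨rfl, hb'⟩ := h4
        have hbb : b = b'' := by injection hb'
        subst hbb
        have := WellMatched.ext a b _ ha hb (ih u'' v'' rfl)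
        simpa [List.append_assoc] using this
  | append w₁ w₂ h₁ h₂ ih₁ ih₂ =>
    intro u' v' huv
    rcases List.append_eq_append_iff.mp huv with ⟨a', rfl, rfl⟩ | ⟨c', rfl, rfl⟩
    · have := WellMatched.append _ _ h₁ (ih₂ a' v' rfl)
      simpa [List.append_assoc] using this
    · have := WellMatched.append _ _ (ih₁ u' c' rfl) h₂
      simpa [List.append_assoc] using this

def WM (A : Type) [VPAlphabet A] : Type := {w : List A // WellMatched w}

instance : Monoid (WM A) where
  one := ⟨[], WellMatched.nil⟩
  mul u v := ⟨u.1 ++ v.1, WellMatched.append _ _ u.2 v.2⟩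
  mul_assoc a b c := Subtype.ext (List.append_assoc _ _ _)
  one_mul a := Subtype.ext (List.nil_append _)
  mul_one a := Subtype.ext (List.append_nil _)

@[simp] theorem WM.mul_val (x y : WM A) : (x * y).1 = x.1 ++ y.1 := rfl
@[simp] theorem WM.one_val : (1 : WM A).1 = [] := rfl

instance : Nonempty (WM A) := ⟨1⟩

def extWord (u v : List A) (h : WellMatched (u ++ v)) (x : WM A) : WM A :=
  ⟨u ++ x.1 ++ v, wm_insert h x.2⟩

@[simp] theorem extWord_val (u v : List A) (h : WellMatched (u ++ v)) (x : WM A) :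
    (extWord u v h x).1 = u ++ x.1 ++ v := rfl

structure ExtAlgebra (R : Type*) [Monoid R] where
  O : Submonoid (Function.End R)
  mulLeft_mem : ∀ r : R, (fun x => r * x) ∈ O
  mulRight_mem : ∀ r : R, (fun x => x * r) ∈ O

structure ExtAlgHom {R S : Type*} [Monoid R] [Monoid S]
    (ER : ExtAlgebra R) (ES : ExtAlgebra S) where
  toMonoidHom : R →* S
  opMap : ER.O →* ES.O
  compat : ∀ (e : ER.O) (r : R),
    (opMap e : Function.End S) (toMonoidHom r) = toMonoidHom ((e : Function.End R) r)

/-- A morphism of `Ext`-algebras from the free `Ext`-algebra of well-matched words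
into an `Ext`-algebra `R`, given by its monoid part and by the images of the
operations `ext_{u,v}`. -/
structure ExtHomWM (A : Type) [VPAlphabet A] {R : Type*} [Monoid R] (ER : ExtAlgebra R) where
  toMonoidHom : WM A →* R
  op : ∀ u v : List A, WellMatched (u ++ v) → ER.O
  op_one : op [] [] WellMatched.nil = 1
  op_comp : ∀ u v (h : WellMatched (u ++ v)) u' v' (h' : WellMatched (u' ++ v'))
      (h'' : WellMatched ((u ++ u') ++ (v' ++ v))),
      op (u ++ u') (v' ++ v) h'' = op u v h * op u' v' h'
  op_spec : ∀ u v (h : WellMatched (u ++ v)) (x : WM A),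
      (op u v h : Function.End R) (toMonoidHom x) = toMonoidHom (extWord u v h x)

/-- `R` recognises `L` via the morphism `φ` when `L` is the preimage of its image. -/
def Recognises {R : Type*} [Monoid R] {ER : ExtAlgebra R}
    (φ : ExtHomWM A ER) (L : Set (WM A)) : Prop :=
  L = φ.toMonoidHom ⁻¹' (φ.toMonoidHom '' L)

/-- The free `Ext`-algebra structure on the monoid of well-matched words. -/
def freeExt (A : Type) [VPAlphabet A] : ExtAlgebra (WM A) where
  O :=
    { carrier := {e | ∃ u v, ∃ h : WellMatched (u ++ v), ∀ x : WM A, e x = extWord u v h x}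
      one_mem' := ⟨[], [], WellMatched.nil, fun x => Subtype.ext (by show x.1 = [] ++ x.1 ++ []; simp)⟩
      mul_mem' := by
        rintro e f ⟨u, v, h, he⟩ ⟨u', v', h', hf⟩
        have h'' : WellMatched ((u ++ u') ++ (v' ++ v)) := by
          simpa [List.append_assoc] using wm_insert h h'
        exact ⟨u ++ u', v' ++ v, h'', fun x => by
          rw [show (e * f) x = e (f x) from rfl, hf, he]
          exact Subtype.ext (by simp [List.append_assoc])⟩ }
  mulLeft_mem r := ⟨r.1, [], by simpa using r.2, fun x => Subtype.ext (by simp)⟩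
  mulRight_mem r := ⟨[], r.1, by simpa using r.2, fun x => Subtype.ext (by simp)⟩

/-- A sub-`Ext`-algebra of an `Ext`-algebra. -/
structure SubExt {S : Type*} [Monoid S] (ES : ExtAlgebra S) where
  carrier : Submonoid S
  ops : Submonoid (Function.End S)
  ops_le : ops ≤ ES.O
  maps_to : ∀ e ∈ ops, ∀ x ∈ carrier, e x ∈ carrier
  mulLeft_mem : ∀ r ∈ carrier, (fun x => r * x) ∈ ops
  mulRight_mem : ∀ r ∈ carrier, (fun x => x * r) ∈ ops

/-- The `Ext`-algebra structure induced on a sub-`Ext`-algebra. -/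
def SubExt.toExtAlgebra {S : Type*} [Monoid S] {ES : ExtAlgebra S} (T : SubExt ES) :
    ExtAlgebra T.carrier where
  O :=
    { carrier := {e : Function.End T.carrier | ∃ f ∈ T.ops, ∀ x : T.carrier, (e x : S) = f x}
      one_mem' := ⟨1, T.ops.one_mem, fun _ => rfl⟩
      mul_mem' := by
        rintro e e' ⟨f, hf, he⟩ ⟨f', hf', he'⟩
        exact ⟨f * f', mul_mem hf hf', fun x => by
          rw [show (e * e') x = e (e' x) from rfl, show (f * f') (x : S) = f (f' x) from rfl,
            ← he', he]⟩ }
  mulLeft_mem r := ⟨fun x => (r : S) * x, T.mulLeft_mem r r.2, fun _ => rfl⟩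
  mulRight_mem r := ⟨fun x => x * (r : S), T.mulRight_mem r r.2, fun _ => rfl⟩

/-- `ER` is a quotient of `ES` if there is a surjective morphism of `Ext`-algebras
from `ES` onto `ER`. -/
def IsQuotientOf {R S : Type*} [Monoid R] [Monoid S]
    (ER : ExtAlgebra R) (ES : ExtAlgebra S) : Prop :=
  ∃ h : ExtAlgHom ES ER, Function.Surjective h.toMonoidHom ∧ Function.Surjective h.opMap

/-- Bundled finite `Ext`-algebras. -/
structure BExt : Type 1 where
  carrier : Type
  [mon : Monoid carrier]
  [fin : Finite carrier]
  ext : ExtAlgebra carrier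

attribute [instance] BExt.mon BExt.fin

/-! ### Visibly pushdown automata -/

structure VPA (A : Type) [VPAlphabet A] where
  Q : Type
  [finQ : Finite Q]
  q0 : Q
  Γ : Type
  [finΓ : Finite Γ]
  bot : Γ
  δ : A → Q → Γ → Q × List Γ
  F : Set Q
  call_spec : ∀ a q G, VPAlphabet.kind a = VPKind.call → ∃ G', (δ a q G).2 = [G', G]
  ret_spec : ∀ a q G, VPAlphabet.kind a = VPKind.ret → (δ a q G).2 = []
  int_spec : ∀ a q G, VPAlphabet.kind a = VPKind.intern → (δ a q G).2 = [G]

attribute [instance] VPA.finQ VPA.finΓ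

def VPA.runAux (M : VPA A) : List A → M.Q → List M.Γ → M.Q × List M.Γ
  | [], q, s => (q, s)
  | _ :: w, q, [] => M.runAux w q []
  | a :: w, q, G :: s => M.runAux w (M.δ a q G).1 ((M.δ a q G).2 ++ s)

def VPA.Accepts (M : VPA A) (w : List A) : Prop :=
  (M.runAux w M.q0 [M.bot]).1 ∈ M.F ∧ (M.runAux w M.q0 [M.bot]).2 = [M.bot]

/-- The language of well-matched words accepted by a VPA. -/
def VPA.lang (M : VPA A) : Set (WM A) := {w | M.Accepts w.1}

/-- `L` is a visibly pushdown language: it is accepted by a visibly pushdown automaton. -/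
def IsVPL (L : Set (WM A)) : Prop := ∃ M : VPA A, L = M.lang

/-! ### Direct products of Ext-algebras -/

def prodGens {R S : Type*} [Monoid R] [Monoid S] (ER : ExtAlgebra R) (ES : ExtAlgebra S) :
    Set (Function.End (R × S)) :=
  {e | ∃ f ∈ ER.O, ∀ p : R × S, e p = (f p.1, p.2)} ∪
    {e | ∃ g ∈ ES.O, ∀ p : R × S, e p = (p.1, g p.2)}

def prodExt {R S : Type*} [Monoid R] [Monoid S] (ER : ExtAlgebra R) (ES : ExtAlgebra S) :
    ExtAlgebra (R × S) where
  O := Submonoid.closure (prodGens ER ES)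
  mulLeft_mem := by
    intro r
    let f : Function.End (R × S) := fun p => (r.1 * p.1, p.2)
    let g : Function.End (R × S) := fun p => (p.1, r.2 * p.2)
    have h1 : f ∈ Submonoid.closure (prodGens ER ES) :=
      Submonoid.subset_closure
        (Or.inl ⟨fun x => r.1 * x, ER.mulLeft_mem r.1, fun p => rfl⟩)
    have h2 : g ∈ Submonoid.closure (prodGens ER ES) :=
      Submonoid.subset_closure
        (Or.inr ⟨fun x => r.2 * x, ES.mulLeft_mem r.2, fun p => rfl⟩)
    have he : ((fun p => r * p) : Function.End (R × S)) = f * g := by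
      funext p
      rfl
    rw [he]
    exact mul_mem h1 h2
  mulRight_mem := by
    intro r
    let f : Function.End (R × S) := fun p => (p.1 * r.1, p.2)
    let g : Function.End (R × S) := fun p => (p.1, p.2 * r.2)
    have h1 : f ∈ Submonoid.closure (prodGens ER ES) :=
      Submonoid.subset_closure
        (Or.inl ⟨fun x => x * r.1, ER.mulRight_mem r.1, fun p => rfl⟩)
    have h2 : g ∈ Submonoid.closure (prodGens ER ES) :=
      Submonoid.subset_closure
        (Or.inr ⟨fun x => x * r.2, ES.mulRight_mem r.2, fun p => rfl⟩)
    have he : ((fun p => p * r) : Function.End (R × S)) = f * g := by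
      funext p
      rfl
    rw [he]
    exact mul_mem h1 h2

/-! ### Pseudo-varieties -/

/-- A pseudo-variety of visibly pushdown languages. -/
structure LangVariety where
  mem : ∀ (B : Type) [VPAlphabet B] [Finite B], Set (WM B) → Prop
  vpl : ∀ (B : Type) [VPAlphabet B] [Finite B] (L : Set (WM B)), mem B L → IsVPL L
  univ_mem : ∀ (B : Type) [VPAlphabet B] [Finite B], mem B Set.univ
  compl_mem : ∀ (B : Type) [VPAlphabet B] [Finite B] (L : Set (WM B)), mem B L → mem B Lᶜ
  inter_mem : ∀ (B : Type) [VPAlphabet B] [Finite B] (L₁ L₂ : Set (WM B)),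
    mem B L₁ → mem B L₂ → mem B (L₁ ∩ L₂)
  inv_ext : ∀ (B : Type) [VPAlphabet B] [Finite B] (u v : List B)
    (h : WellMatched (u ++ v)) (L : Set (WM B)), mem B L → mem B (extWord u v h ⁻¹' L)
  inv_hom : ∀ (B C : Type) [VPAlphabet B] [Finite B] [VPAlphabet C] [Finite C]
    (φ : ExtHomWM B (freeExt C)) (L : Set (WM C)), mem C L → mem B (φ.toMonoidHom ⁻¹' L)

/-- The trivial `Ext`-algebra. -/
def punitExt : ExtAlgebra PUnit where
  O := ⊤
  mulLeft_mem _ := trivial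
  mulRight_mem _ := trivial

/-- A pseudo-variety of finite `Ext`-algebras. -/
structure AlgVariety where
  mem : BExt → Prop
  punit_mem : mem { carrier := PUnit, ext := punitExt }
  quot_closed : ∀ R S : BExt, mem S → IsQuotientOf R.ext S.ext → mem R
  sub_closed : ∀ (S : BExt) (T : SubExt S.ext),
    mem S → mem { carrier := T.carrier, ext := T.toExtAlgebra }
  prod_closed : ∀ R S : BExt,
    mem R → mem S → mem { carrier := R.carrier × S.carrier, ext := prodExt R.ext S.ext }


/-- `L` is recognised by some member of the pseudo-variety `V` of finite
`Ext`-algebras. -/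
def RecByVar (V : AlgVariety) (B : Type) [VPAlphabet B] (L : Set (WM B)) : Prop :=
  ∃ R : BExt, V.mem R ∧ ∃ φ : ExtHomWM B R.ext, Recognises φ L

/-! A language recognised by `φ` is a preimage `φ⁻¹(P)`. Complements and intersections come from
`Pᶜ` and from `P₁ ×ˢ P₂` under the product morphism into `R₁ × R₂`. Since `φ` intertwines
`ext_{u,v}` with `φ.op u v`, the inverse image of `φ⁻¹(P)` under `ext_{u,v}` is the preimage
of `(φ.op u v)⁻¹(P)`. An inverse morphism `ψ ∘ φ` factors through the image of `ψ`, which is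
a sub-`Ext`-algebra. Finally `φ⁻¹(P)` is accepted by a VPA whose states are the elements of
the finite algebra and whose stack records, for each pending call, the state reached before it.
-/

theorem recognises_iff_exists_preimage {R : Type*} [Monoid R] {ER : ExtAlgebra R}
    {φ : ExtHomWM A ER} {L : Set (WM A)} :
    Recognises φ L ↔ ∃ P : Set R, L = φ.toMonoidHom ⁻¹' P :=
  ⟨fun h => ⟨_, h⟩, by rintro ⟨P, rfl⟩; exact Set.preimage_image_preimage.symm⟩

theorem recByVar_iff {V : AlgVariety} {L : Set (WM A)} :
    RecByVar V A L ↔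
      ∃ R : BExt, V.mem R ∧ ∃ (φ : ExtHomWM A R.ext) (P : Set R.carrier),
        L = φ.toMonoidHom ⁻¹' P := by
  simp only [RecByVar, recognises_iff_exists_preimage]

theorem VPA.runAux_append (M : VPA A) (u v : List A) (q : M.Q) (s : List M.Γ) :
    M.runAux (u ++ v) q s = M.runAux v (M.runAux u q s).1 (M.runAux u q s).2 := by
  induction u generalizing q s with
  | nil => rfl
  | cons a u ih => cases s <;> simp only [List.cons_append, VPA.runAux, ih]

namespace ExtHomWM

section Automaton

variable {R : Type} [Monoid R] [Finite R] {ER : ExtAlgebra R} [Finite A] (φ : ExtHomWM A ER)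

/-- The state is the value under `φ` of the well-matched factor read since the last pending
call; a call pushes the current state together with the call letter and restarts from `1`,
and the matching return `b` of a pushed call `(p, c)` moves to `p * ext_{c,b}(q)`. A return
on the bottom symbol `none` never happens on a well-matched word. -/
abbrev toVPA (P : Set R) : VPA A where
  Q := R
  q0 := 1
  Γ := Option (R × {c : A // VPAlphabet.kind c = VPKind.call})
  bot := none
  δ a q G :=
    match h : VPAlphabet.kind a, G with
    | .call, _ => (1, [some (q, ⟨a, h⟩), G])
    | .ret, some (p, c) =>
        (p * (φ.op [c.1] [a] (.ext c.1 a [] c.2 h .nil) : Function.End R) q, [])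
    | .ret, none => (q, [])
    | .intern, _ => (q * φ.toMonoidHom ⟨[a], .intern a h⟩, [G])
  F := P
  call_spec a q G h := by split <;> simp_all
  ret_spec a q G h := by split <;> simp_all
  int_spec a q G h := by split <;> simp_all

variable {P : Set R} {q : R} {G : Option (R × {c : A // VPAlphabet.kind c = VPKind.call})}

theorem toVPA_δ_call {a : A} (ha : VPAlphabet.kind a = VPKind.call) :
    (φ.toVPA P).δ a q G = (1, [some (q, ⟨a, ha⟩), G]) := by
  simp only [toVPA]
  split <;> rename_i h <;> first | rfl | simp [ha] at h

theorem toVPA_δ_ret {b : A} (hb : VPAlphabet.kind b = VPKind.ret) (p : R)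
    (c : {c : A // VPAlphabet.kind c = VPKind.call}) :
    (φ.toVPA P).δ b q (some (p, c)) =
      (p * (φ.op [c.1] [b] (.ext c.1 b [] c.2 hb .nil) : Function.End R) q, []) := by
  simp only [toVPA]
  split <;> rename_i h <;> first | (obtain ⟨rfl, rfl⟩ := h; rfl) | simp [hb] at h

theorem toVPA_δ_intern {c : A} (hc : VPAlphabet.kind c = VPKind.intern) :
    (φ.toVPA P).δ c q G = (q * φ.toMonoidHom ⟨[c], .intern c hc⟩, [G]) := by
  simp only [toVPA]
  split <;> rename_i h <;> first | rfl | simp [hc] at h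

theorem runAux_toVPA {w : List A} (hw : WellMatched w) (s : List (φ.toVPA P).Γ) :
    (φ.toVPA P).runAux w q (G :: s) = (q * φ.toMonoidHom ⟨w, hw⟩, G :: s) := by
  induction hw generalizing q G s with
  | nil =>
    show (q, G :: s) = (q * φ.toMonoidHom 1, G :: s)
    rw [map_one, mul_one]
  | intern c hc => rw [VPA.runAux, toVPA_δ_intern φ hc]; rfl
  | ext a b w ha hb hw ih =>
    calc (φ.toVPA P).runAux (a :: w ++ [b]) q (G :: s)
        = (φ.toVPA P).runAux (w ++ [b]) 1 (some (q, ⟨a, ha⟩) :: G :: s) := by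
          rw [List.cons_append, VPA.runAux, toVPA_δ_call φ ha]; rfl
      _ = (φ.toVPA P).runAux [b] (φ.toMonoidHom ⟨w, hw⟩) (some (q, ⟨a, ha⟩) :: G :: s) := by
          rw [VPA.runAux_append, ih, one_mul]
      _ = (q * (φ.op [a] [b] (.ext a b [] ha hb .nil) : Function.End R) (φ.toMonoidHom ⟨w, hw⟩),
            G :: s) := by
          rw [VPA.runAux, toVPA_δ_ret φ hb]; rfl
      _ = (q * φ.toMonoidHom ⟨a :: w ++ [b], .ext a b w ha hb hw⟩, G :: s) := by
          exact congrArg (fun r => (q * r, G :: s)) (φ.op_spec _ _ _ ⟨w, hw⟩)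
  | append u v hu hv ihu ihv =>
    rw [VPA.runAux_append, ihu, ihv, mul_assoc]
    exact congrArg (fun r => (q * r, G :: s)) (map_mul φ.toMonoidHom ⟨u, hu⟩ ⟨v, hv⟩).symm

theorem isVPL_preimage (P : Set R) : IsVPL (φ.toMonoidHom ⁻¹' P) := by
  refine ⟨φ.toVPA P, Set.ext fun w => ?_⟩
  change _ ↔ (φ.toVPA P).Accepts w.1
  rw [VPA.Accepts, runAux_toVPA φ w.2, one_mul]
  exact (and_iff_left rfl).symm

end Automaton

end ExtHomWM

theorem prodExt_mem {R S : Type*} [Monoid R] [Monoid S] {ER : ExtAlgebra R}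
    {ES : ExtAlgebra S} {f : Function.End R} {g : Function.End S} (hf : f ∈ ER.O)
    (hg : g ∈ ES.O) : (fun p : R × S => (f p.1, g p.2)) ∈ (prodExt ER ES).O := by
  have hf' : (fun p : R × S => (f p.1, p.2)) ∈ (prodExt ER ES).O :=
    Submonoid.subset_closure (Or.inl ⟨f, hf, fun _ => rfl⟩)
  have hg' : (fun p : R × S => (p.1, g p.2)) ∈ (prodExt ER ES).O :=
    Submonoid.subset_closure (Or.inr ⟨g, hg, fun _ => rfl⟩)
  exact mul_mem hf' hg'

def SubExt.ofSubmonoid {S : Type*} [Monoid S] (ES : ExtAlgebra S) (M : Submonoid S) :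
    SubExt ES where
  carrier := M
  ops :=
    { carrier := {f : Function.End S | f ∈ ES.O ∧ Set.MapsTo f M M}
      one_mem' := ⟨ES.O.one_mem, Set.mapsTo_id _⟩
      mul_mem' := fun hf hg => ⟨mul_mem hf.1 hg.1, hf.2.comp hg.2⟩ }
  ops_le _ hf := hf.1
  maps_to _ hf _ hx := hf.2 hx
  mulLeft_mem r hr := ⟨ES.mulLeft_mem r, fun _ hx => mul_mem hr hx⟩
  mulRight_mem r hr := ⟨ES.mulRight_mem r, fun _ hx => mul_mem hx hr⟩

def SubExt.restrictOp {S : Type*} [Monoid S] {ES : ExtAlgebra S} (T : SubExt ES)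
    (f : Function.End S) (hf : f ∈ T.ops) : T.toExtAlgebra.O :=
  ⟨fun x => ⟨f x, T.maps_to f hf x x.2⟩, f, hf, fun _ => rfl⟩

theorem mem_freeExt_O {C : Type} [VPAlphabet C] {e : Function.End (WM C)} :
    e ∈ (freeExt C).O ↔ ∃ u v, ∃ h : WellMatched (u ++ v), ∀ x, e x = extWord u v h x :=
  Iff.rfl

namespace ExtHomWM

variable {R : Type*} [Monoid R] {ER : ExtAlgebra R}

variable (A) in
def toPUnit : ExtHomWM A punitExt where
  toMonoidHom := 1
  op _ _ _ := 1
  op_one := rfl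
  op_comp _ _ _ _ _ _ _ := (one_mul 1).symm
  op_spec _ _ _ _ := rfl

def prod {S : Type*} [Monoid S] {ES : ExtAlgebra S} (φ : ExtHomWM A ER)
    (ψ : ExtHomWM A ES) : ExtHomWM A (prodExt ER ES) where
  toMonoidHom := φ.toMonoidHom.prod ψ.toMonoidHom
  op u v h := ⟨_, prodExt_mem (φ.op u v h).2 (ψ.op u v h).2⟩
  op_one := by
    ext1
    simp only [φ.op_one, ψ.op_one]
    rfl
  op_comp u v h u' v' h' h'' := by
    ext1
    simp only [φ.op_comp u v h u' v' h' h'', ψ.op_comp u v h u' v' h' h'']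
    rfl
  op_spec u v h x := Prod.ext (φ.op_spec u v h x) (ψ.op_spec u v h x)

theorem preimage_extWord_preimage (φ : ExtHomWM A ER) (u v : List A)
    (h : WellMatched (u ++ v)) (P : Set R) :
    extWord u v h ⁻¹' (φ.toMonoidHom ⁻¹' P) =
      φ.toMonoidHom ⁻¹' ((φ.op u v h : Function.End R) ⁻¹' P) := by
  ext x
  exact (congrArg (· ∈ P) (φ.op_spec u v h x)).to_iff.symm

variable {C : Type} [VPAlphabet C] (ψ : ExtHomWM C ER)

/-- Sends an operation of the free `Ext`-algebra, which is some `ext_{u,v}`, to `ψ.op u v` for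
a chosen such presentation; all choices agree on the image of `ψ`. -/
noncomputable def mapOp (e : (freeExt C).O) : ER.O :=
  ψ.op _ _ (mem_freeExt_O.mp e.2).choose_spec.choose_spec.choose

theorem mapOp_apply_map (e : (freeExt C).O) (y : WM C) :
    (ψ.mapOp e : Function.End R) (ψ.toMonoidHom y) =
      ψ.toMonoidHom ((e : Function.End (WM C)) y) := by
  rw [mapOp, ψ.op_spec, (mem_freeExt_O.mp e.2).choose_spec.choose_spec.choose_spec y]

theorem mapOp_mem_ofSubmonoid_ops (e : (freeExt C).O) :
    (ψ.mapOp e : Function.End R) ∈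
      (SubExt.ofSubmonoid ER (MonoidHom.mrange ψ.toMonoidHom)).ops := by
  refine ⟨(ψ.mapOp e).2, ?_⟩
  rintro _ ⟨y, rfl⟩
  exact ⟨_, (ψ.mapOp_apply_map e y).symm⟩

noncomputable def compRangeRestrict (φ : ExtHomWM A (freeExt C)) :
    ExtHomWM A (SubExt.ofSubmonoid ER (MonoidHom.mrange ψ.toMonoidHom)).toExtAlgebra where
  toMonoidHom :=
    (ψ.toMonoidHom.comp φ.toMonoidHom).codRestrict _ fun x => ⟨φ.toMonoidHom x, rfl⟩
  op u v h := SubExt.restrictOp _ _ (ψ.mapOp_mem_ofSubmonoid_ops (φ.op u v h))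
  op_one := by
    refine Subtype.ext (funext ?_)
    rintro ⟨_, y, rfl⟩
    refine Subtype.ext ?_
    change (ψ.mapOp (φ.op [] [] .nil) : Function.End R) (ψ.toMonoidHom y) = ψ.toMonoidHom y
    rw [mapOp_apply_map, φ.op_one]
    rfl
  op_comp u v h u' v' h' h'' := by
    refine Subtype.ext (funext ?_)
    rintro ⟨_, y, rfl⟩
    refine Subtype.ext ?_
    change (ψ.mapOp (φ.op _ _ h'') : Function.End R) (ψ.toMonoidHom y) =
      (ψ.mapOp (φ.op u v h) : Function.End R)
        ((ψ.mapOp (φ.op u' v' h') : Function.End R) (ψ.toMonoidHom y))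
    rw [mapOp_apply_map, mapOp_apply_map, mapOp_apply_map, φ.op_comp u v h u' v' h' h'']
    rfl
  op_spec u v h x :=
    Subtype.ext <| (ψ.mapOp_apply_map _ _).trans (congrArg _ (φ.op_spec u v h x))

end ExtHomWM

/-- The languages recognised by a pseudo-variety of finite `Ext`-algebras form a
pseudo-variety of VPL. -/
theorem statement8 (V : AlgVariety) :
    (∀ (B : Type) [VPAlphabet B] [Finite B] (L : Set (WM B)), RecByVar V B L → IsVPL L) ∧
    (∀ (B : Type) [VPAlphabet B] [Finite B], RecByVar V B (Set.univ : Set (WM B))) ∧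
    (∀ (B : Type) [VPAlphabet B] [Finite B] (L : Set (WM B)),
      RecByVar V B L → RecByVar V B Lᶜ) ∧
    (∀ (B : Type) [VPAlphabet B] [Finite B] (L₁ L₂ : Set (WM B)),
      RecByVar V B L₁ → RecByVar V B L₂ → RecByVar V B (L₁ ∩ L₂)) ∧
    (∀ (B : Type) [VPAlphabet B] [Finite B] (u v : List B) (h : WellMatched (u ++ v))
      (L : Set (WM B)), RecByVar V B L → RecByVar V B (extWord u v h ⁻¹' L)) ∧
    (∀ (B C : Type) [VPAlphabet B] [Finite B] [VPAlphabet C] [Finite C]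
      (φ : ExtHomWM B (freeExt C)) (L : Set (WM C)),
      RecByVar V C L → RecByVar V B (φ.toMonoidHom ⁻¹' L)) := by
  simp only [recByVar_iff]
  refine ⟨?_, ?_, ?_, ?_, ?_, ?_⟩
  · rintro B _ _ _ ⟨R, -, φ, P, rfl⟩
    exact φ.isVPL_preimage P
  · intro B _ _
    exact ⟨_, V.punit_mem, ExtHomWM.toPUnit B, Set.univ, rfl⟩
  · rintro B _ _ _ ⟨R, hR, φ, P, rfl⟩
    exact ⟨R, hR, φ, Pᶜ, rfl⟩
  · rintro B _ _ _ _ ⟨R₁, hR₁, φ₁, P₁, rfl⟩ ⟨R₂, hR₂, φ₂, P₂, rfl⟩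
    exact ⟨_, V.prod_closed R₁ R₂ hR₁ hR₂, φ₁.prod φ₂, P₁ ×ˢ P₂, rfl⟩
  · rintro B _ _ u v h _ ⟨R, hR, φ, P, rfl⟩
    exact ⟨R, hR, φ, _, φ.preimage_extWord_preimage u v h P⟩
  · rintro B C _ _ _ _ φ _ ⟨R, hR, ψ, P, rfl⟩
    exact ⟨_, V.sub_closed R _ hR, ψ.compRangeRestrict φ, Subtype.val ⁻¹' P, rfl⟩
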